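/- Let A ∈ ℝ^{N×N} be symmetric with A·1_N = 0, and let Δ^{(m,m)}A denote the m-fold iterated mixed second finite difference with periodic extension, scaled by N² at each application. With F the N×N DFT matrix and Γ = diag(γ_1,…,γ_N) the multiplier matrix, the 2D DFT satisfies F A Fᵀ = Γ^m F (Δ^{(m,m)} A) Fᵀ Γ^m for every positive integer m. -/

import Mathlib

open Complex Matrix

/-- The mixed second finite difference with periodic indexing, scaled by `N²`. -/
def mixedDiff (N : ℕ) [NeZero N] (A : Matrix (Fin N) (Fin N) ℝ) : Matrix (Fin N) (Fin N) ℝ :=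
  Matrix.of fun t t' =>
    (N : ℝ) ^ 2 * (A t t' - A (t - 1) t' - A t (t' - 1) + A (t - 1) (t' - 1))

/-!
With `ζ = exp (-2πi/N)` a primitive `N`-th root of unity, `F k t = ζ ^ (k t)`, so shifting the
rows (columns) of a matrix by one multiplies row `k` (column `l`) of its transform by `ζ ^ k`
(`ζ ^ l`). Hence one mixed difference multiplies entry `(k, l)` of `F B Fᵀ` by
`N (1 - ζ ^ k) · N (1 - ζ ^ l) = (γ k γ l)⁻¹` when `k, l ≠ 0`. Row `0` and column `0` of
`F A Fᵀ` vanish because the row and column sums of `A` do.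
-/

section MatrixLemmas

variable {ι R : Type*} [Fintype ι] [Semiring R]

lemma mul_mul_transpose_apply_eq_zero_of_vecMul_eq_zero {F B : Matrix ι ι R} {i : ι}
    (h : F i ᵥ* B = 0) (j : ι) : (F * B * Fᵀ) i j = 0 := by
  rw [mul_mul_apply, transpose_transpose, dotProduct_mulVec, h, zero_dotProduct]

lemma mul_mul_transpose_apply_eq_zero_of_mulVec_eq_zero {F B : Matrix ι ι R} {j : ι}
    (h : B *ᵥ F j = 0) (i : ι) : (F * B * Fᵀ) i j = 0 := by
  rw [mul_mul_apply, transpose_transpose, h, dotProduct_zero]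

lemma diagonal_mul_mul_diagonal_eq_self [DecidableEq ι] {d : ι → R} {G : Matrix ι ι R} (i₀ : ι)
    (hd : ∀ i, i ≠ i₀ → d i = 1) (hrow : ∀ j, G i₀ j = 0) (hcol : ∀ i, G i i₀ = 0) :
    diagonal d * G * diagonal d = G := by
  ext i j
  rw [mul_diagonal, diagonal_mul]
  rcases eq_or_ne i i₀ with rfl | hi
  · simp [hrow]
  rcases eq_or_ne j i₀ with rfl | hj
  · simp [hcol]
  rw [hd i hi, hd j hj, one_mul, mul_one]

end MatrixLemmas

section DFT

variable {R : Type*} [CommRing R] {N : ℕ} [NeZero N]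

def dftMatrix (N : ℕ) (ζ : R) : Matrix (Fin N) (Fin N) R :=
  Matrix.of fun k t => ζ ^ ((k : ℕ) * t)

lemma pow_val_add_one_of_pow_eq_one {M : Type*} [Monoid M] {ζ : M} (hζ : ζ ^ N = 1)
    (t : Fin N) : ζ ^ ((t + 1 : Fin N) : ℕ) = ζ ^ (t : ℕ) * ζ := by
  rw [Fin.val_add, Fin.val_one', ← pow_eq_pow_mod _ hζ, pow_add, ← pow_eq_pow_mod _ hζ, pow_one]

lemma dftMatrix_apply_add_one {ζ : R} (hζ : ζ ^ N = 1) (k t : Fin N) :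
    dftMatrix N ζ k (t + 1) = ζ ^ (k : ℕ) * dftMatrix N ζ k t := by
  have hζk : (ζ ^ (k : ℕ)) ^ N = 1 := by rw [← pow_mul, mul_comm, pow_mul, hζ, one_pow]
  simp only [dftMatrix, of_apply, pow_mul, pow_val_add_one_of_pow_eq_one hζk, mul_comm]

lemma dftMatrix_zero_row (ζ : R) : dftMatrix N ζ 0 = fun _ => 1 := by
  ext t
  simp [dftMatrix]

lemma dftMatrix_mul_submatrix_sub_one {ι : Type*} {ζ : R} (hζ : ζ ^ N = 1)
    (B : Matrix (Fin N) ι R) :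
    dftMatrix N ζ * B.submatrix (· - 1) id =
      diagonal (fun k : Fin N => ζ ^ (k : ℕ)) * (dftMatrix N ζ * B) := by
  ext k j
  rw [diagonal_mul, mul_apply, mul_apply, Finset.mul_sum]
  refine Fintype.sum_equiv (Equiv.subRight 1) _ _ fun t => ?_
  rw [Equiv.subRight_apply, submatrix_apply, id, ← mul_assoc, ← dftMatrix_apply_add_one hζ,
    sub_add_cancel]

lemma submatrix_sub_one_mul_dftMatrix_transpose {ι : Type*} {ζ : R} (hζ : ζ ^ N = 1)
    (B : Matrix ι (Fin N) R) :
    B.submatrix id (· - 1) * (dftMatrix N ζ)ᵀ =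
      B * (dftMatrix N ζ)ᵀ * diagonal (fun k : Fin N => ζ ^ (k : ℕ)) := by
  apply transpose_injective
  rw [transpose_mul, transpose_transpose, transpose_submatrix,
    dftMatrix_mul_submatrix_sub_one hζ, transpose_mul, transpose_mul, transpose_transpose,
    diagonal_transpose]

end DFT

section MixedDiff

variable {N : ℕ} [NeZero N]

lemma mixedDiff_map_ofReal (A : Matrix (Fin N) (Fin N) ℝ) :
    (mixedDiff N A).map (fun a => (a : ℂ)) =
      (N : ℂ) ^ 2 • (A.map (fun a => (a : ℂ)) - (A.map (fun a => (a : ℂ))).submatrix (· - 1) id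
        - (A.map (fun a => (a : ℂ))).submatrix id (· - 1)
        + (A.map (fun a => (a : ℂ))).submatrix (· - 1) (· - 1)) := by
  ext t t'
  simp [mixedDiff]

lemma dftMatrix_mul_mixedDiff_mul {ζ : ℂ} (hζ : ζ ^ N = 1) (A : Matrix (Fin N) (Fin N) ℝ) :
    dftMatrix N ζ * (mixedDiff N A).map (fun a => (a : ℂ)) * (dftMatrix N ζ)ᵀ =
      diagonal (fun k : Fin N => (N : ℂ) * (1 - ζ ^ (k : ℕ))) *
        (dftMatrix N ζ * A.map (fun a => (a : ℂ)) * (dftMatrix N ζ)ᵀ) *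
          diagonal (fun k : Fin N => (N : ℂ) * (1 - ζ ^ (k : ℕ))) := by
  set F := dftMatrix N ζ
  set B := A.map (fun a => (a : ℂ))
  set D := diagonal (fun k : Fin N => ζ ^ (k : ℕ))
  have h10 : F * B.submatrix (· - 1) id * Fᵀ = D * (F * B * Fᵀ) := by
    rw [dftMatrix_mul_submatrix_sub_one hζ, Matrix.mul_assoc, Matrix.mul_assoc]
  have h01 : F * B.submatrix id (· - 1) * Fᵀ = F * B * Fᵀ * D := by
    rw [Matrix.mul_assoc, submatrix_sub_one_mul_dftMatrix_transpose hζ, ← Matrix.mul_assoc,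
      ← Matrix.mul_assoc]
  have h11 : F * B.submatrix (· - 1) (· - 1) * Fᵀ = D * (F * B * Fᵀ) * D := by
    have hcomp : B.submatrix (· - 1) (· - 1) = (B.submatrix id (· - 1)).submatrix (· - 1) id := rfl
    rw [hcomp, dftMatrix_mul_submatrix_sub_one hζ,
      Matrix.mul_assoc, h01, Matrix.mul_assoc D]
  rw [mixedDiff_map_ofReal, Matrix.mul_smul, Matrix.smul_mul, Matrix.mul_add, Matrix.mul_sub,
    Matrix.mul_sub, Matrix.add_mul, Matrix.sub_mul, Matrix.sub_mul, h10, h01, h11]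
  ext k l
  simp [D, diagonal_mul, mul_diagonal]
  ring

lemma dftMatrix_mul_iterate_mixedDiff_mul {ζ : ℂ} (hζ : ζ ^ N = 1)
    (A : Matrix (Fin N) (Fin N) ℝ) (m : ℕ) :
    dftMatrix N ζ * ((mixedDiff N)^[m] A).map (fun a => (a : ℂ)) * (dftMatrix N ζ)ᵀ =
      diagonal (fun k : Fin N => (N : ℂ) * (1 - ζ ^ (k : ℕ))) ^ m *
        (dftMatrix N ζ * A.map (fun a => (a : ℂ)) * (dftMatrix N ζ)ᵀ) *
          diagonal (fun k : Fin N => (N : ℂ) * (1 - ζ ^ (k : ℕ))) ^ m := by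
  induction m with
  | zero => simp
  | succ m ih =>
    rw [Function.iterate_succ_apply', dftMatrix_mul_mixedDiff_mul hζ, ih]
    simp only [Matrix.mul_assoc]
    rw [← pow_succ, ← Matrix.mul_assoc _ (_ ^ m), ← pow_succ']

end MixedDiff

lemma Complex.isPrimitiveRoot_exp_neg (n : ℕ) (hn : n ≠ 0) :
    IsPrimitiveRoot (exp (-2 * Real.pi * I / n)) n := by
  rw [show -2 * Real.pi * I / n = -(2 * Real.pi * I / n) by ring, Complex.exp_neg]
  exact (isPrimitiveRoot_exp n hn).inv

theorem dft_iterated_diff_general (N : ℕ) [NeZero N]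
    (A : Matrix (Fin N) (Fin N) ℝ) (hsymm : A.IsSymm)
    (hsum : A.mulVec (fun _ => 1) = 0)
    (F : Matrix (Fin N) (Fin N) ℂ)
    (hF : ∀ t t', F t t' =
      Complex.exp (-2 * Real.pi * Complex.I * ((t : ℕ) : ℂ) * ((t' : ℕ) : ℂ) / N))
    (γ : Fin N → ℂ)
    (hγ : ∀ t : Fin N, t ≠ 0 →
      γ t = (N : ℂ)⁻¹ * (1 - Complex.exp (-2 * Real.pi * Complex.I * ((t : ℕ) : ℂ) / N))⁻¹)
    (m : ℕ) :
    F * A.map (fun a => (a : ℂ)) * F.transpose =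
      (Matrix.diagonal γ) ^ m * F * ((mixedDiff N)^[m] A).map (fun a => (a : ℂ)) *
        F.transpose * (Matrix.diagonal γ) ^ m := by
  set ζ := exp (-2 * Real.pi * I / N)
  have hζ : IsPrimitiveRoot ζ N := Complex.isPrimitiveRoot_exp_neg N (NeZero.ne N)
  have hexp (n : ℕ) : exp (-2 * Real.pi * I * n / N) = ζ ^ n := by
    rw [← exp_nat_mul]
    congr 1
    ring
  obtain rfl : F = dftMatrix N ζ := by
    ext t t'
    rw [hF, dftMatrix, of_apply, ← hexp, Nat.cast_mul, mul_assoc _ ((t : ℕ) : ℂ)]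
  set B := A.map (fun a => (a : ℂ))
  have hrow : B *ᵥ (fun _ => 1) = 0 := by
    ext i
    simpa [B, mulVec, dotProduct] using congrArg (fun v => ((v i : ℝ) : ℂ)) hsum
  have hcol : (fun _ => 1) ᵥ* B = 0 := by
    have hBsymm : B.IsSymm := hsymm.map _
    rw [← hBsymm.eq, vecMul_transpose, hrow]
  have hγ_mul (k : Fin N) (hk : k ≠ 0) : (γ k * (N * (1 - ζ ^ (k : ℕ)))) ^ m = 1 := by
    have hN : (N : ℂ) ≠ 0 := Nat.cast_ne_zero.mpr (NeZero.ne N)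
    have hζk : 1 - ζ ^ (k : ℕ) ≠ 0 :=
      sub_ne_zero.mpr (hζ.pow_ne_one_of_pos_of_lt (Fin.val_ne_zero_iff.mpr hk) k.isLt).symm
    rw [hγ k hk, hexp, mul_mul_mul_comm, inv_mul_cancel₀ hN, inv_mul_cancel₀ hζk, one_mul, one_pow]
  have hG_row : ∀ l, (dftMatrix N ζ * B * (dftMatrix N ζ)ᵀ) 0 l = 0 :=
    mul_mul_transpose_apply_eq_zero_of_vecMul_eq_zero (by rw [dftMatrix_zero_row, hcol])
  have hG_col : ∀ k, (dftMatrix N ζ * B * (dftMatrix N ζ)ᵀ) k 0 = 0 :=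
    mul_mul_transpose_apply_eq_zero_of_mulVec_eq_zero (by rw [dftMatrix_zero_row, hrow])
  rw [Matrix.mul_assoc (diagonal γ ^ m * _), Matrix.mul_assoc (diagonal γ ^ m),
    ← Matrix.mul_assoc (dftMatrix N ζ), dftMatrix_mul_iterate_mixedDiff_mul hζ.pow_eq_one]
  conv_lhs => rw [← diagonal_mul_mul_diagonal_eq_self 0 hγ_mul hG_row hG_col]
  ext k l
  simp [diagonal_pow, diagonal_mul, mul_diagonal, mul_pow]
  ring

theorem dft_iterated_diff (N : ℕ) [NeZero N]
    (A : Matrix (Fin N) (Fin N) ℝ) (hsymm : A.IsSymm)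
    (hsum : A.mulVec (fun _ => 1) = 0)
    (F : Matrix (Fin N) (Fin N) ℂ)
    (hF : ∀ t t', F t t' =
      Complex.exp (-2 * Real.pi * Complex.I * ((t : ℕ) : ℂ) * ((t' : ℕ) : ℂ) / N))
    (γ : Fin N → ℂ) (hγ0 : γ 0 = 1)
    (hγ : ∀ t : Fin N, t ≠ 0 →
      γ t = (N : ℂ)⁻¹ * (1 - Complex.exp (-2 * Real.pi * Complex.I * ((t : ℕ) : ℂ) / N))⁻¹)
    (m : ℕ) (hm : 0 < m) :
    F * A.map (fun a => (a : ℂ)) * F.transpose =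
      (Matrix.diagonal γ) ^ m * F * ((mixedDiff N)^[m] A).map (fun a => (a : ℂ)) *
        F.transpose * (Matrix.diagonal γ) ^ m :=
  dft_iterated_diff_general N A hsymm hsum F hF γ hγ m
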